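/- arXiv:0803.0690 — 2 statements merged into one kernel-verified Lean document; each statement's English description precedes it below -/
import Mathlib

section
/- Let F : ℝ → ℝ be a continuous 1-periodic function with F > 0, and define f : ℝ² → ℝ by f(x,y) = F(y), a conformal factor on the unit square torus ℝ²/ℤ² depending only on one variable. Then the metric g = f²(dx²+dy²) satisfies area(g) − var(f) ≥ (sys(g) + (1/2)‖f₀‖₁)², where f₀ = F − m, m = ∫₀¹ F(y) dy, and ‖f₀‖₁ = ∫₀¹ |F(y) − m| dy. -/
open MeasureTheory intervalIntegral

/-- A path `γ : [0,1] → ℂ ≅ ℝ²` is piecewise `C¹` with derivative `γ'` if it is continuous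
on `[0,1]` and there is a finite partition `0 = t₀ < t₁ < ⋯ < tₙ = 1` such that on each
closed piece the derivative of `γ` extends to a continuous function agreeing with `γ'`
in the interior of the piece. -/
def IsPiecewiseC1Path (γ γ' : ℝ → ℂ) : Prop :=
  ContinuousOn γ (Set.Icc 0 1) ∧
  ∃ (n : ℕ) (t : ℕ → ℝ), 0 < n ∧ t 0 = 0 ∧ t n = 1 ∧
    (∀ i < n, t i < t (i + 1)) ∧
    ∀ i < n, ∃ d : ℝ → ℂ, ContinuousOn d (Set.Icc (t i) (t (i + 1))) ∧
      ∀ x ∈ Set.Ioo (t i) (t (i + 1)), HasDerivAt γ (d x) x ∧ γ' x = d x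

/-- The length of a path `γ` with derivative `γ'` in the conformal metric `f²(dx²+dy²)`. -/
noncomputable def gLength (f : ℂ → ℝ) (γ γ' : ℝ → ℂ) : ℝ :=
  ∫ t in (0:ℝ)..1, f (γ t) * ‖γ' t‖

/-- The systole of the metric `f²(dx²+dy²)` on the torus `ℝ²/L`: the infimum of lengths of
piecewise `C¹` paths whose endpoint difference is a nonzero lattice vector. -/
noncomputable def systole (L : Set ℂ) (f : ℂ → ℝ) : ℝ :=
  sInf { ℓ : ℝ | ∃ γ γ' : ℝ → ℂ, IsPiecewiseC1Path γ γ' ∧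
    γ 1 - γ 0 ∈ L ∧ γ 1 - γ 0 ≠ 0 ∧ ℓ = gLength f γ γ' }

/-! The metric only depends on `y`, so `area - var = m²` (the variance identity), while the
horizontal closed curve through a minimum point `y₀` of `F` shows `sys ≤ F y₀`. Integrating the
pointwise bound `|F - m| ≤ (F - m) + 2 (m - F y₀)` gives `F y₀ + ½‖F - m‖₁ ≤ m`. -/

section MeanDefect

variable {F : ℝ → ℝ}

theorem integral_sq_sub_integral_sq_sub_mean (hF : IntervalIntegrable F volume 0 1)
    (hF2 : IntervalIntegrable (fun y => F y ^ 2) volume 0 1) :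
    (∫ y in (0:ℝ)..1, F y ^ 2) - ∫ y in (0:ℝ)..1, (F y - ∫ y in (0:ℝ)..1, F y) ^ 2
      = (∫ y in (0:ℝ)..1, F y) ^ 2 := by
  set m := ∫ y in (0:ℝ)..1, F y
  have hsq : IntervalIntegrable (fun y => (F y - m) ^ 2) volume 0 1 := by
    convert (hF2.sub (hF.const_mul (2 * m))).add (intervalIntegrable_const (c := m ^ 2)) using 1
    ext y; ring
  rw [← integral_sub hF2 hsq]
  calc (∫ y in (0:ℝ)..1, F y ^ 2 - (F y - m) ^ 2)
      = ∫ y in (0:ℝ)..1, (2 * m * F y - m ^ 2) := by congr 1; ext y; ring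
    _ = m ^ 2 := by
      rw [integral_sub (hF.const_mul _) intervalIntegrable_const,
        intervalIntegral.integral_const_mul]
      simp only [intervalIntegral.integral_const, sub_zero, one_smul]
      ring

theorem add_half_integral_abs_sub_mean_le (hF : IntervalIntegrable F volume 0 1) {c : ℝ}
    (hc : ∀ y ∈ Set.Icc (0:ℝ) 1, c ≤ F y) :
    c + (1 / 2) * ∫ y in (0:ℝ)..1, |F y - ∫ y in (0:ℝ)..1, F y| ≤ ∫ y in (0:ℝ)..1, F y := by
  set m := ∫ y in (0:ℝ)..1, F y
  have hcm : c ≤ m := by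
    simpa using integral_mono_on zero_le_one intervalIntegrable_const hF hc
  have habs : ∫ y in (0:ℝ)..1, |F y - m| ≤ ∫ y in (0:ℝ)..1, (F y + (m - 2 * c)) := by
    refine integral_mono_on zero_le_one (hF.sub intervalIntegrable_const).abs
      (hF.add intervalIntegrable_const) fun y hy => abs_le.2 ⟨?_, ?_⟩ <;> linarith [hc y hy]
  rw [integral_add hF intervalIntegrable_const] at habs
  simp only [intervalIntegral.integral_const, sub_zero, one_smul] at habs
  linarith

end MeanDefect

section Systole

variable {f : ℂ → ℝ} {L : Set ℂ}

theorem isPiecewiseC1Path_segment (z v : ℂ) :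
    IsPiecewiseC1Path (fun t => z + t * v) (fun _ => v) := by
  refine ⟨by fun_prop, 1, fun i => i, one_pos, by simp, by simp, fun i _ => by simp, ?_⟩
  intro i _
  refine ⟨fun _ => v, continuousOn_const, fun x _ => ⟨?_, rfl⟩⟩
  simpa using ((Complex.ofRealCLM.hasDerivAt (x := x)).mul_const v).const_add z

theorem gLength_nonneg (hf : ∀ z, 0 ≤ f z) (γ γ' : ℝ → ℂ) : 0 ≤ gLength f γ γ' :=
  integral_nonneg zero_le_one fun _ _ => mul_nonneg (hf _) (norm_nonneg _)

theorem systole_nonneg (hf : ∀ z, 0 ≤ f z) : 0 ≤ systole L f :=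
  Real.sInf_nonneg <| by
    rintro ℓ ⟨γ, γ', -, -, -, rfl⟩
    exact gLength_nonneg hf γ γ'

theorem systole_le_gLength_segment (hf : ∀ z, 0 ≤ f z) (z : ℂ) {v : ℂ} (hvL : v ∈ L)
    (hv : v ≠ 0) : systole L f ≤ gLength f (fun t => z + t * v) (fun _ => v) := by
  refine csInf_le ⟨0, ?_⟩ ⟨_, _, isPiecewiseC1Path_segment z v, by simpa using hvL,
    by simpa using hv, rfl⟩
  rintro ℓ ⟨γ, γ', -, -, -, rfl⟩
  exact gLength_nonneg hf γ γ'

end Systole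

theorem loewner_one_variable_defect_general
    (F : ℝ → ℝ) (hF : Continuous F)
    (hFpos : ∀ y, 0 < F y)
    (f : ℂ → ℝ) (hfdef : ∀ z : ℂ, f z = F z.im)
    (L : Set ℂ) (hL : L = {z : ℂ | ∃ m n : ℤ, z = (m : ℂ) + (n : ℂ) * Complex.I})
    (area m var l1 : ℝ)
    (hm : m = ∫ y in (0:ℝ)..1, F y)
    (harea : area = ∫ x in (0:ℝ)..1, ∫ y in (0:ℝ)..1,
      (f ((x : ℂ) + (y : ℂ) * Complex.I)) ^ 2)
    (hvar : var = ∫ x in (0:ℝ)..1, ∫ y in (0:ℝ)..1,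
      (f ((x : ℂ) + (y : ℂ) * Complex.I) - m) ^ 2)
    (hl1 : l1 = ∫ y in (0:ℝ)..1, |F y - m|) :
    area - var ≥ (systole L f + (1 / 2) * l1) ^ 2 := by
  have hfxy : ∀ x y : ℝ, f ((x : ℂ) + (y : ℂ) * Complex.I) = F y := by simp [hfdef]
  have hf : ∀ z, 0 ≤ f z := fun z => hfdef z ▸ (hFpos _).le
  have hFint : IntervalIntegrable F volume 0 1 := hF.intervalIntegrable 0 1
  have hAV : area - var = m ^ 2 := by
    simp only [harea, hvar, hfxy, intervalIntegral.integral_const, sub_zero, one_smul, hm]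
    exact integral_sq_sub_integral_sq_sub_mean hFint ((hF.pow 2).intervalIntegrable 0 1)
  obtain ⟨y₀, -, hy₀⟩ := isCompact_Icc.exists_isMinOn (Set.nonempty_Icc.2 zero_le_one)
    hF.continuousOn
  have hsys : systole L f ≤ F y₀ := by
    have h1L : (1 : ℂ) ∈ L := hL ▸ ⟨1, 0, by simp⟩
    have h := systole_le_gLength_segment hf (y₀ * Complex.I) h1L one_ne_zero
    simpa [gLength, add_comm _ ((_ : ℝ) : ℂ), hfxy] using h
  have hdefect : F y₀ + (1 / 2) * l1 ≤ m := hl1 ▸ hm ▸ add_half_integral_abs_sub_mean_le hFint hy₀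
  have hl1_nonneg : 0 ≤ l1 := hl1 ▸ integral_nonneg zero_le_one fun y _ => abs_nonneg _
  rw [ge_iff_le, hAV]
  exact pow_le_pow_left₀ (by linarith [systole_nonneg (L := L) hf]) (by linarith) 2

/-- **One-variable conformal factor: inequality with combined defect.**
On the unit square torus `ℝ²/ℤ²`, if the conformal factor `f(x,y) = F(y)` depends only on
one variable, then `area(g) − var(f) ≥ (sys(g) + ½‖f₀‖₁)²`, where `f₀ = F − m`, `m` the mean. -/
theorem loewner_one_variable_defect
    (F : ℝ → ℝ) (hF : Continuous F) (hFper : ∀ y : ℝ, F (y + 1) = F y)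
    (hFpos : ∀ y, 0 < F y)
    (f : ℂ → ℝ) (hfdef : ∀ z : ℂ, f z = F z.im)
    (L : Set ℂ) (hL : L = {z : ℂ | ∃ m n : ℤ, z = (m : ℂ) + (n : ℂ) * Complex.I})
    (area m var l1 : ℝ)
    (hm : m = ∫ y in (0:ℝ)..1, F y)
    (harea : area = ∫ x in (0:ℝ)..1, ∫ y in (0:ℝ)..1,
      (f ((x : ℂ) + (y : ℂ) * Complex.I)) ^ 2)
    (hvar : var = ∫ x in (0:ℝ)..1, ∫ y in (0:ℝ)..1,
      (f ((x : ℂ) + (y : ℂ) * Complex.I) - m) ^ 2)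
    (hl1 : l1 = ∫ y in (0:ℝ)..1, |F y - m|) :
    area - var ≥ (systole L f + (1 / 2) * l1) ^ 2 :=
  loewner_one_variable_defect_general F hF hFpos f hfdef L hL area m var l1 hm harea hvar hl1
end

section
/- Let τ ∈ ℂ with Im τ > 0, set σ = √(Im τ), and let L = ℤ·(σ⁻¹τ) + ℤ·(σ⁻¹) ⊂ ℂ ≅ ℝ² (a lattice of covolume 1) with fundamental domain D = { s·σ⁻¹ + t·σ⁻¹τ : s, t ∈ [0,1) }. Then for every continuous L-periodic function f : ℝ² → ℝ with f > 0, the mean satisfies the lower bound ∫_D f ≥ σ·sys(g), where g = f²(dx²+dy²). -/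
open MeasureTheory intervalIntegral

/-!
Every horizontal segment `s ↦ s·σ⁻¹ + t·σ⁻¹τ`, `s ∈ [0,1]`, joins two points differing by the
lattice vector `σ⁻¹`, so its length `σ⁻¹ ∫₀¹ f(s·σ⁻¹ + t·σ⁻¹τ) ds` is at least the systole.
Averaging this over `t ∈ [0,1]` and exchanging the order of integration gives the bound.
-/

theorem intervalIntegral.integral_integral_swap_of_continuous {E : Type*}
    [NormedAddCommGroup E] [NormedSpace ℝ E] {f : ℝ → ℝ → E} (hf : Continuous f.uncurry)
    (a b c d : ℝ) :
    ∫ x in a..b, ∫ y in c..d, f x y = ∫ y in c..d, ∫ x in a..b, f x y := by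
  have hint : Integrable f.uncurry
      ((volume.restrict (Set.uIoc a b)).prod (volume.restrict (Set.uIoc c d))) := by
    rw [Measure.prod_restrict]
    exact (hf.continuousOn.integrableOn_compact (isCompact_uIcc.prod isCompact_uIcc)).mono_set
      (Set.prod_mono Set.uIoc_subset_uIcc Set.uIoc_subset_uIcc)
  simp only [intervalIntegral_eq_integral_uIoc, MeasureTheory.integral_smul]
  rw [integral_integral_swap hint, smul_comm]

theorem isPiecewiseC1Path_affine (v p : ℂ) :
    IsPiecewiseC1Path (fun s : ℝ => (s : ℂ) * v + p) (fun _ => v) := by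
  have hderiv (x : ℝ) : HasDerivAt (fun s : ℝ => (s : ℂ) * v + p) v x := by
    simpa using ((hasDerivAt_id x).ofReal_comp.mul_const v).add_const p
  exact ⟨by fun_prop, 1, fun i => i, one_pos, by norm_num, by norm_num,
    fun i _ => by simp,
    fun i _ => ⟨fun _ => v, continuousOn_const, fun x _ => ⟨hderiv x, rfl⟩⟩⟩

theorem gLength_affine (f : ℂ → ℝ) (v p : ℂ) :
    gLength f (fun s : ℝ => (s : ℂ) * v + p) (fun _ => v) =
      ‖v‖ * ∫ s in (0:ℝ)..1, f (s * v + p) := by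
  rw [gLength, intervalIntegral.integral_mul_const, mul_comm]

theorem systole_le_gLength {L : Set ℂ} {f : ℂ → ℝ} (hf : ∀ z, 0 ≤ f z) {γ γ' : ℝ → ℂ}
    (hγ : IsPiecewiseC1Path γ γ') (hL : γ 1 - γ 0 ∈ L) (h0 : γ 1 - γ 0 ≠ 0) :
    systole L f ≤ gLength f γ γ' := by
  refine csInf_le ⟨0, ?_⟩ ⟨γ, γ', hγ, hL, h0, rfl⟩
  rintro ℓ ⟨γ, γ', -, -, -, rfl⟩
  exact integral_nonneg zero_le_one fun t _ => mul_nonneg (hf _) (norm_nonneg _)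

theorem systole_le_norm_mul_integral {L : Set ℂ} {f : ℂ → ℝ} (hf : ∀ z, 0 ≤ f z) {v : ℂ}
    (hvL : v ∈ L) (hv : v ≠ 0) (p : ℂ) :
    systole L f ≤ ‖v‖ * ∫ s in (0:ℝ)..1, f (s * v + p) := by
  rw [← gLength_affine]
  exact systole_le_gLength hf (isPiecewiseC1Path_affine v p) (by simpa using hvL)
    (by simpa using hv)

theorem mean_ge_sigma_mul_systole_general
    (τ : ℂ) (hτ : 0 < τ.im) (σ : ℝ) (hσ : σ = Real.sqrt τ.im)
    (L : Set ℂ)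
    (hL : L = {z : ℂ | ∃ m n : ℤ, z = (m : ℂ) * ((σ : ℂ)⁻¹ * τ) + (n : ℂ) * (σ : ℂ)⁻¹})
    (f : ℂ → ℝ) (hf : Continuous f) (hfpos : ∀ z, 0 < f z)
    (mean : ℝ)
    (hmean : mean = ∫ s in (0:ℝ)..1, ∫ t in (0:ℝ)..1,
      f ((s : ℂ) * (σ : ℂ)⁻¹ + (t : ℂ) * ((σ : ℂ)⁻¹ * τ))) :
    mean ≥ σ * systole L f := by
  have hσpos : 0 < σ := hσ ▸ Real.sqrt_pos.mpr hτ
  set F : ℝ → ℝ → ℝ := fun s t => f ((s : ℂ) * (σ : ℂ)⁻¹ + (t : ℂ) * ((σ : ℂ)⁻¹ * τ))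
  have hF : Continuous F.uncurry := hf.comp (by fun_prop)
  have hσL : (σ : ℂ)⁻¹ ∈ L := hL ▸ ⟨0, 1, by simp⟩
  have hrow (t : ℝ) : σ * systole L f ≤ ∫ s in (0:ℝ)..1, F s t := by
    have hsys := systole_le_norm_mul_integral (fun z => (hfpos z).le) hσL
      (by simpa using hσpos.ne') (t * ((σ : ℂ)⁻¹ * τ))
    rw [norm_inv, Complex.norm_real, Real.norm_of_nonneg hσpos.le] at hsys
    calc σ * systole L f ≤ σ * (σ⁻¹ * ∫ s in (0:ℝ)..1, F s t) := by gcongr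
      _ = ∫ s in (0:ℝ)..1, F s t := by field_simp
  calc σ * systole L f = ∫ _ in (0:ℝ)..1, σ * systole L f := by simp
    _ ≤ ∫ t in (0:ℝ)..1, ∫ s in (0:ℝ)..1, F s t :=
        integral_mono_on zero_le_one intervalIntegrable_const
          ((continuous_parametric_intervalIntegral_of_continuous' (f := fun t s => F s t)
            (hF.comp continuous_swap) 0 1).intervalIntegrable 0 1) fun t _ => hrow t
    _ = mean := by rw [hmean, integral_integral_swap_of_continuous hF]

/-- **Lower bound for the mean of the conformal factor.**
For `τ` in the upper half plane, `σ = √(Im τ)`, and the unit-covolume lattice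
`L = ℤ·(σ⁻¹τ) + ℤ·σ⁻¹ ⊂ ℂ` with fundamental domain `D = {s·σ⁻¹ + t·σ⁻¹τ : s,t ∈ [0,1)}`,
every continuous positive `L`-periodic `f` satisfies `∫_D f ≥ σ·sys(f²(dx²+dy²))`. -/
theorem mean_ge_sigma_mul_systole
    (τ : ℂ) (hτ : 0 < τ.im) (σ : ℝ) (hσ : σ = Real.sqrt τ.im)
    (L : Set ℂ)
    (hL : L = {z : ℂ | ∃ m n : ℤ, z = (m : ℂ) * ((σ : ℂ)⁻¹ * τ) + (n : ℂ) * (σ : ℂ)⁻¹})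
    (f : ℂ → ℝ) (hf : Continuous f) (hfpos : ∀ z, 0 < f z)
    (hper : ∀ z ∈ L, ∀ x : ℂ, f (x + z) = f x)
    (mean : ℝ)
    (hmean : mean = ∫ s in (0:ℝ)..1, ∫ t in (0:ℝ)..1,
      f ((s : ℂ) * (σ : ℂ)⁻¹ + (t : ℂ) * ((σ : ℂ)⁻¹ * τ))) :
    mean ≥ σ * systole L f :=
  mean_ge_sigma_mul_systole_general τ hτ σ hσ L hL f hf hfpos mean hmean
end
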